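/- arXiv:2410.20813 — 3 statements merged into one kernel-verified Lean document; each statement's English description precedes it below -/
import Mathlib

section
/- (Generalized Andreief identity) Let (X, Σ, μ) be a probability space, let N ≥ M ≥ 1, let f_1,…,f_M and g_1,…,g_N be functions in L²(μ), and let A be an (N−M)×N matrix over ℂ. Then det of the N×N matrix whose first N−M rows are A and whose last M rows have entries ∫_X f_j(t) g_k(t) dμ(t) (for 1 ≤ j ≤ M, 1 ≤ k ≤ N) equals (1/M!) ∫_{X^M} det(B(y)) · det(f_l(y_j))_{1≤l,j≤M} dμ(y_1)⋯dμ(y_M), where B(y) is the N×N matrix whose first N−M rows are A and whose last M rows have entries g_k(y_j). -/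
/-!
The determinant is multilinear in its last `M` rows, so by Fubini the left-hand side equals
`∫ det B(y) * ∏ b, f b (y b)` over `X^M`. On the right-hand side, expand `det (f l (y j))` by the
Leibniz formula and relabel the coordinates of `y` in each of the `M!` terms: permuting the
coordinates permutes the last rows of `B(y)`, and the sign this produces cancels the sign of the
Leibniz term, so every term equals the left-hand side.
-/

open MeasureTheory Matrix Equiv Equiv.Perm

namespace MeasureTheory

variable {ι ι' X E : Type*} [Fintype ι] [Fintype ι'] [MeasurableSpace X] (μ : Measure X)
  [SigmaFinite μ] [NormedAddCommGroup E]

theorem measurePreserving_comp_equiv (σ : ι' ≃ ι) :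
    MeasurePreserving (fun y : ι → X => y ∘ σ) (Measure.pi fun _ => μ)
      (Measure.pi fun _ => μ) := by
  convert measurePreserving_piCongrLeft (fun _ : ι' => μ) σ.symm using 1
  ext y i
  simp [MeasurableEquiv.coe_piCongrLeft, Equiv.piCongrLeft_apply_eq_cast]

theorem integral_comp_equiv [NormedSpace ℝ E] (σ : ι' ≃ ι) (F : (ι' → X) → E) :
    ∫ y, F (y ∘ σ) ∂(Measure.pi fun _ => μ) = ∫ y, F y ∂(Measure.pi fun _ => μ) :=
  (measurePreserving_comp_equiv μ σ).integral_comp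
    (MeasurableEquiv.arrowCongr' σ.symm (MeasurableEquiv.refl X)).measurableEmbedding F

theorem integrable_comp_equiv_iff (σ : ι' ≃ ι) {F : (ι' → X) → E} :
    Integrable (fun y => F (y ∘ σ)) (Measure.pi fun _ => μ) ↔
      Integrable F (Measure.pi fun _ => μ) :=
  (measurePreserving_comp_equiv μ σ).integrable_comp_emb
    (MeasurableEquiv.arrowCongr' σ.symm (MeasurableEquiv.refl X)).measurableEmbedding

end MeasureTheory

namespace MultilinearMap

variable {R ι p : Type*} [Fintype ι] [DecidableEq ι] [Fintype p] [DecidableEq p]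

theorem apply_eq_sum_prod_mul [CommSemiring R] (Φ : MultilinearMap R (fun _ : ι => p → R) R)
    (v : ι → p → R) :
    Φ v = ∑ r : ι → p, (∏ i, v i (r i)) * Φ fun i => Pi.single (r i) 1 := by
  conv_lhs => rw [show v = fun i => ∑ k, v i k • Pi.single k 1 from
    funext fun i => pi_eq_sum_univ' (v i), Φ.map_sum]
  simp_rw [Φ.map_smul_univ, smul_eq_mul]

variable {𝕜 X : Type*} [RCLike 𝕜] [MeasurableSpace X] (μ : Measure X) [SigmaFinite μ]

theorem integrable_apply_pi (Φ : MultilinearMap 𝕜 (fun _ : ι => p → 𝕜) 𝕜)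
    {F : ι → X → p → 𝕜} (hF : ∀ i k, Integrable (fun t => F i t k) μ) :
    Integrable (fun y => Φ fun i => F i (y i)) (Measure.pi fun _ => μ) := by
  simp only [fun y : ι → X => Φ.apply_eq_sum_prod_mul fun i => F i (y i)]
  exact integrable_finsetSum _ fun r _ =>
    (Integrable.fintype_prod fun i => hF i (r i)).mul_const _

theorem integral_apply_pi (Φ : MultilinearMap 𝕜 (fun _ : ι => p → 𝕜) 𝕜)
    {F : ι → X → p → 𝕜} (hF : ∀ i k, Integrable (fun t => F i t k) μ) :
    ∫ y, (Φ fun i => F i (y i)) ∂(Measure.pi fun _ => μ) =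
      Φ fun i k => ∫ t, F i t k ∂μ := by
  simp only [fun y : ι → X => Φ.apply_eq_sum_prod_mul fun i => F i (y i)]
  rw [Φ.apply_eq_sum_prod_mul, integral_finsetSum _ fun r _ =>
    (Integrable.fintype_prod fun i => hF i (r i)).mul_const _]
  refine Finset.sum_congr rfl fun r _ => ?_
  rw [integral_mul_const, integral_fintype_prod_eq_prod (fun i t => F i t (r i))]

end MultilinearMap

namespace Matrix

variable {R m n p : Type*} [CommRing R] [Fintype p] [DecidableEq p]

def detWithTopRows (e : m ⊕ n ≃ p) (A : Matrix m p R) :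
    MultilinearMap R (fun _ : n => p → R) R :=
  ((detRowAlternating : (p → R) [⋀^p]→ₗ[R] R).toMultilinearMap.domDomCongr e.symm).currySum A

theorem detWithTopRows_apply (e : m ⊕ n ≃ p) (A : Matrix m p R) (V : n → p → R) :
    detWithTopRows e A V =
      (of fun i k => Sum.elim (fun a => A a k) (fun b => V b k) (e.symm i)).det := by
  change det (of fun i => Sum.elim A V (e.symm i)) = _
  congr 1
  ext i k
  simp only [of_apply]
  cases e.symm i <;> rfl

theorem detWithTopRows_comp_perm [Fintype m] [DecidableEq m] [Fintype n] [DecidableEq n]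
    (e : m ⊕ n ≃ p) (A : Matrix m p R) (V : n → p → R) (σ : Perm n) :
    detWithTopRows e A (V ∘ σ) = sign σ • detWithTopRows e A V := by
  set τ : Perm p := e.permCongr (Perm.sumCongr (Equiv.refl m) σ)
  have hrows : (fun i => Sum.elim A (V ∘ σ) (e.symm i)) =
      (fun i => Sum.elim A V (e.symm i)) ∘ τ := by
    ext i : 1
    simp only [τ, Function.comp_apply, Equiv.permCongr_apply, Equiv.symm_apply_apply]
    cases e.symm i <;> rfl
  have hsign : sign τ = sign σ := by
    rw [sign_permCongr, sign_sumCongr, sign_refl, one_mul]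
  change detRowAlternating (fun i => Sum.elim A (V ∘ σ) (e.symm i)) =
    sign σ • detRowAlternating (fun i => Sum.elim A V (e.symm i))
  rw [hrows, AlternatingMap.map_perm, hsign]

end Matrix

namespace MeasureTheory

variable {ι X 𝕜 : Type*} [Fintype ι] [DecidableEq ι] [RCLike 𝕜] [MeasurableSpace X]
  (μ : Measure X) [SigmaFinite μ]

theorem integral_mul_det_eq_factorial_mul (Ψ : (ι → X) → 𝕜)
    (hΨ : ∀ (σ : Perm ι) (y : ι → X), Ψ (y ∘ σ) = sign σ • Ψ y) (f : ι → X → 𝕜)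
    (hΨf : Integrable (fun y => Ψ y * ∏ i, f i (y i)) (Measure.pi fun _ => μ)) :
    ∫ y, Ψ y * (of fun l j => f l (y j)).det ∂(Measure.pi fun _ => μ) =
      (Fintype.card ι).factorial * ∫ y, Ψ y * ∏ i, f i (y i) ∂(Measure.pi fun _ => μ) := by
  set G : (ι → X) → 𝕜 := fun y => Ψ y * ∏ i, f i (y i)
  have hterm (y : ι → X) (σ : Perm ι) :
      Ψ y * (((sign σ : ℤ) : 𝕜) * ∏ j, f (σ j) (y j)) = G (y ∘ ⇑σ⁻¹) := by
    have hprod : ∏ i, f i (y (σ⁻¹ i)) = ∏ j, f (σ j) (y j) := by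
      simpa using (Equiv.prod_comp σ fun i => f i (y (σ⁻¹ i))).symm
    simp only [G, hΨ, sign_inv, Function.comp_apply, hprod, Units.smul_def, zsmul_eq_mul]
    ring
  calc ∫ y, Ψ y * (of fun l j => f l (y j)).det ∂(Measure.pi fun _ => μ)
      = ∫ y, ∑ σ : Perm ι, G (y ∘ ⇑σ⁻¹) ∂(Measure.pi fun _ => μ) := by
        congr 1 with y
        simp only [det_apply', of_apply, Finset.mul_sum, ← hterm]
    _ = ∑ σ : Perm ι, ∫ y, G (y ∘ ⇑σ⁻¹) ∂(Measure.pi fun _ => μ) :=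
        integral_finsetSum _ fun σ _ => (integrable_comp_equiv_iff μ σ⁻¹).2 hΨf
    _ = (Fintype.card ι).factorial * ∫ y, G y ∂(Measure.pi fun _ => μ) := by
        simp [integral_comp_equiv, Fintype.card_perm]

end MeasureTheory

theorem generalized_andreief_general
    {X : Type*} [MeasurableSpace X] (μ : Measure X) [IsProbabilityMeasure μ]
    (N M : ℕ) (hMN : M ≤ N)
    (f : Fin M → X → ℂ) (g : Fin N → X → ℂ)
    (hf : ∀ j, MemLp (f j) 2 μ) (hg : ∀ k, MemLp (g k) 2 μ)
    (A : Matrix (Fin (N - M)) (Fin N) ℂ)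
    (e : Fin (N - M) ⊕ Fin M ≃ Fin N :=
      finSumFinEquiv.trans (finCongr (Nat.sub_add_cancel hMN))) :
    (Matrix.of fun i k : Fin N =>
        Sum.elim (fun a => A a k) (fun b => ∫ t, f b t * g k t ∂μ) (e.symm i)).det
      = (1 / (Nat.factorial M : ℂ)) *
        ∫ y : Fin M → X,
          (Matrix.of fun i k : Fin N =>
            Sum.elim (fun a => A a k) (fun b => g k (y b)) (e.symm i)).det *
          (Matrix.of fun l j : Fin M => f l (y j)).det
        ∂(Measure.pi fun _ => μ) := by
  simp only [← detWithTopRows_apply]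
  set Φ := detWithTopRows e A
  have hfg (b : Fin M) (k : Fin N) : Integrable (fun t => f b t * g k t) μ :=
    (hf b).integrable_mul (hg k)
  have hsplit (y : Fin M → X) :
      Φ (fun b k => g k (y b)) * ∏ b, f b (y b) = Φ fun b k => f b (y b) * g k (y b) := by
    rw [mul_comm, ← smul_eq_mul, ← Φ.map_smul_univ]
    rfl
  have hLHS : Φ (fun b k => ∫ t, f b t * g k t ∂μ) =
      ∫ y, Φ (fun b k => g k (y b)) * ∏ b, f b (y b) ∂(Measure.pi fun _ => μ) := by
    simp only [hsplit]
    exact (Φ.integral_apply_pi μ (F := fun b t k => f b t * g k t) hfg).symm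
  have hRHS := integral_mul_det_eq_factorial_mul μ (fun y => Φ fun b k => g k (y b))
    (fun σ y => detWithTopRows_comp_perm e A (fun b k => g k (y b)) σ) f
    (by simpa only [hsplit] using Φ.integrable_apply_pi μ (F := fun b t k => f b t * g k t) hfg)
  rw [hLHS, hRHS, Fintype.card_fin, one_div,
    inv_mul_cancel_left₀ (Nat.cast_ne_zero.2 M.factorial_ne_zero)]

/-- The generalized Andreief identity. -/
theorem generalized_andreief
    {X : Type*} [MeasurableSpace X] (μ : Measure X) [IsProbabilityMeasure μ]
    (N M : ℕ) (hM : 1 ≤ M) (hMN : M ≤ N)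
    (f : Fin M → X → ℂ) (g : Fin N → X → ℂ)
    (hf : ∀ j, MemLp (f j) 2 μ) (hg : ∀ k, MemLp (g k) 2 μ)
    (A : Matrix (Fin (N - M)) (Fin N) ℂ)
    (e : Fin (N - M) ⊕ Fin M ≃ Fin N :=
      finSumFinEquiv.trans (finCongr (Nat.sub_add_cancel hMN))) :
    (Matrix.of fun i k : Fin N =>
        Sum.elim (fun a => A a k) (fun b => ∫ t, f b t * g k t ∂μ) (e.symm i)).det
      = (1 / (Nat.factorial M : ℂ)) *
        ∫ y : Fin M → X,
          (Matrix.of fun i k : Fin N =>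
            Sum.elim (fun a => A a k) (fun b => g k (y b)) (e.symm i)).det *
          (Matrix.of fun l j : Fin M => f l (y j)).det
        ∂(Measure.pi fun _ => μ) :=
  generalized_andreief_general μ N M hMN f g hf hg A e
end

section
/- (Cauchy–Vandermonde determinant) Let n_1, n_2 ≥ 0, set n = n_1 + n_2, and let t_1, …, t_n and z_1, …, z_{n_2} be complex numbers with t_k ≠ z_j for all j, k. Then the n×n determinant whose first n_1 rows are (t_k^{i-1})_{1≤i≤n_1, 1≤k≤n} and whose last n_2 rows are (1/(t_k − z_j))_{1≤j≤n_2, 1≤k≤n} equals (−1)^{n_1 n_2 + n_2(n_2−1)/2} · ∏_{1≤j<k≤n} (t_k − t_j) · ∏_{1≤j<k≤n_2} (z_k − z_j) · ∏_{j=1}^{n_2} ∏_{k=1}^{n} (t_k − z_j)^{−1}. -/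
/-!
Multiply column `k` by `Z(t_k)`, where `Z = ∏ⱼ (X - z_j)` is the nodal polynomial of the `z_j`.
The Cauchy rows become evaluations of `q_j = Z / (X - z_j)`, polynomials of degree `< n₂`, so
they are `D` times the power rows `(t_k ^ m)_{m < n₂}`, with `D` the coefficient matrix of the
`q_j`. What remains, with rows `X ^ a * Z` and `X ^ m`, is a Vandermonde determinant once its
rows are rotated by `n₂`, which costs `(-1) ^ (n₁ n₂)`. Finally `D * V(z)ᵀ` is diagonal with
entries `q_j(z_j)`, whose product is `(-1) ^ (n₂ (n₂ - 1) / 2) * V(z) ^ 2`. If two `z_j`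
coincide, both sides vanish.
-/

open Finset Polynomial Matrix Lagrange Equiv

theorem Finset.prod_prod_Iio_eq_prod_prod_Ioi {α M : Type*} [Preorder α] [Fintype α]
    [LocallyFiniteOrderTop α] [LocallyFiniteOrderBot α] [CommMonoid M] (f : α → α → M) :
    ∏ i, ∏ j ∈ Iio i, f i j = ∏ j, ∏ i ∈ Ioi j, f i j :=
  prod_comm' (by simp)

theorem Fin.sum_card_Ioi (n : ℕ) : ∑ i : Fin n, #(Ioi i) = n * (n - 1) / 2 := by
  simp_rw [Fin.card_Ioi]
  rw [Fin.sum_univ_eq_sum_range (fun i => n - 1 - i), ← sum_range_reflect, ← sum_range_id n]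
  exact sum_congr rfl fun i hi => by simp only [mem_range] at hi; omega

theorem Fin.prod_prod_erase_sub {R : Type*} [CommRing R] {n : ℕ} (v : Fin n → R) :
    ∏ i, ∏ j ∈ univ.erase i, (v i - v j)
      = (-1) ^ (n * (n - 1) / 2) * (∏ i, ∏ j ∈ Ioi i, (v j - v i)) ^ 2 := by
  have hpair (i j : Fin n) : (v i - v j) * (v j - v i) = -(v j - v i) ^ 2 := by ring
  simp_rw [← compl_singleton, ← prod_prod_Ioi_mul_eq_prod_prod_off_diag (fun a b => v b - v a),
    hpair, prod_neg, prod_mul_distrib, prod_pow_eq_pow_sum, Fin.sum_card_Ioi, prod_pow]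

theorem Fin.val_finRotate_pow_apply (N k : ℕ) (i : Fin N) :
    ((finRotate N ^ k) i : ℕ) = (i + k) % N := by
  induction k with
  | zero => simp [Nat.mod_eq_of_lt i.isLt]
  | succ k ih =>
    have := i.neZero
    rw [pow_succ', Perm.mul_apply, finRotate_apply, Fin.val_add, ih, Fin.val_one',
      Nat.add_mod_mod, Nat.mod_add_mod, add_assoc]

theorem finAddFlip_trans_finCongr_eq_finRotate_pow (m n : ℕ) :
    (finAddFlip.trans (finCongr (Nat.add_comm n m)) : Perm (Fin (m + n)))
      = finRotate (m + n) ^ n := by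
  ext i
  rw [Fin.val_finRotate_pow_apply]
  refine Fin.addCases (fun a => ?_) (fun b => ?_) i
  · simp [Nat.mod_eq_of_lt (by omega : (a : ℕ) + n < m + n)]
  · simp [show m + b + n = b + (m + n) by omega, Nat.mod_eq_of_lt (by omega : (b : ℕ) < m + n)]

theorem sign_finAddFlip_trans_finCongr (m n : ℕ) :
    Perm.sign (finAddFlip.trans (finCongr (Nat.add_comm n m)) : Perm (Fin (m + n)))
      = (-1) ^ (m * n) := by
  rw [finAddFlip_trans_finCongr_eq_finRotate_pow, map_pow, sign_finRotate, ← pow_mul]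
  rcases n with _ | n
  · simp
  · rw [show (m + (n + 1) - 1) * (n + 1) = m * (n + 1) + n * (n + 1) by
        rw [show m + (n + 1) - 1 = m + n by omega]; ring,
      pow_add, (Nat.even_mul_succ_self n).neg_one_pow, mul_one]

theorem Matrix.of_eval_eq_coeff_mul_pow {R ι κ : Type*} [Semiring R] {n : ℕ} (p : ι → R[X])
    (hp : ∀ i, (p i).natDegree < n) (v : κ → R) :
    (of fun i k => (p i).eval (v k))
      = (of fun i (m : Fin n) => (p i).coeff m) * of fun (m : Fin n) k => v k ^ (m : ℕ) := by
  ext i k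
  rw [of_apply, eval_eq_sum_range' (hp i), mul_apply, ← Fin.sum_univ_eq_sum_range]
  rfl

theorem Matrix.det_submatrix_fromRows_mul {R ι m n : Type*} [CommRing R]
    [Fintype ι] [DecidableEq ι] [Fintype m] [DecidableEq m] [Fintype n] [DecidableEq n]
    (e : ι ≃ m ⊕ n) (A : Matrix m ι R) (B : Matrix n ι R) (D : Matrix n n R) :
    det ((fromRows A (D * B)).submatrix e id) = det D * det ((fromRows A B).submatrix e id) := by
  have hblock := fromBlocks_mul_fromRows A B (1 : Matrix m m R) 0 0 D
  rw [Matrix.one_mul, Matrix.zero_mul, Matrix.zero_mul, add_zero, zero_add] at hblock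
  rw [← hblock, ← submatrix_mul_equiv _ _ e e id, det_mul,
    det_submatrix_equiv_self, det_fromBlocks_zero₂₁, det_one, one_mul]

theorem Matrix.det_submatrix_fromRows_pow_mul_eval_pow {R : Type*} [CommRing R] [Nontrivial R]
    {n₁ n₂ : ℕ} {Z : R[X]} (hZ : Z.Monic) (hdeg : Z.natDegree = n₂)
    (t : Fin (n₁ + n₂) → R) :
    det ((fromRows (of fun (a : Fin n₁) k => t k ^ (a : ℕ) * Z.eval (t k))
        (of fun (m : Fin n₂) k => t k ^ (m : ℕ))).submatrix finSumFinEquiv.symm id)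
      = (-1) ^ (n₁ * n₂) * det (vandermonde t) := by
  set σ : Perm (Fin (n₁ + n₂)) := finAddFlip.trans (finCongr (Nat.add_comm n₂ n₁))
  -- `p i` is `X ^ i` for `i < n₂` and `X ^ (i - n₂) * Z` otherwise
  set p : Fin (n₁ + n₂) → R[X] := fun i =>
    Sum.elim (fun m : Fin n₂ => X ^ (m : ℕ)) (fun a : Fin n₁ => X ^ (a : ℕ) * Z)
      (finSumFinEquiv.symm (finCongr (Nat.add_comm n₁ n₂) i))
  have hp (i : Fin (n₁ + n₂)) : (p i).natDegree = i ∧ (p i).Monic := by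
    obtain ⟨s, hs⟩ := finSumFinEquiv.surjective (finCongr (Nat.add_comm n₁ n₂) i)
    have hi : (i : ℕ) = (finSumFinEquiv s : Fin (n₂ + n₁)) := by simp [hs]
    rcases s with m | a
    · simp only [p, ← hs, symm_apply_apply, Sum.elim_inl]
      simp [hi]
    · simp only [p, ← hs, symm_apply_apply, Sum.elim_inr]
      simp [hi, (monic_X_pow _).natDegree_mul hZ, hdeg, (monic_X_pow _).mul hZ, add_comm]
  have hrows : (fromRows (of fun (a : Fin n₁) k => t k ^ (a : ℕ) * Z.eval (t k))
        (of fun (m : Fin n₂) k => t k ^ (m : ℕ))).submatrix finSumFinEquiv.symm id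
      = (of fun i k => (p i).eval (t k)).submatrix σ id := by
    ext i k
    rcases h : finSumFinEquiv.symm i with a | m <;> simp [σ, p, finAddFlip, h]
  have hvandermonde : det (of fun i k => (p i).eval (t k)) = det (vandermonde t) := by
    rw [← det_transpose]
    exact (det_eval_matrixOfPolynomials_eq_det_vandermonde t p (fun i => (hp i).1)
      (fun i => (hp i).2)).symm
  rw [hrows, det_permute, sign_finAddFlip_trans_finCongr, hvandermonde]
  simp

theorem Lagrange.natDegree_nodal_erase_lt {R : Type*} [CommRing R] [Nontrivial R] {n : ℕ}
    (z : Fin n → R) (j : Fin n) : (nodal (univ.erase j) z).natDegree < n := by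
  rw [natDegree_nodal, card_erase_of_mem (mem_univ j), card_univ, Fintype.card_fin]
  exact Nat.sub_lt j.pos one_pos

theorem Lagrange.eval_nodal_erase {F ι : Type*} [Field F] [DecidableEq ι] {s : Finset ι}
    {v : ι → F} {i : ι} (hi : i ∈ s) {x : F} (hx : x ≠ v i) :
    (nodal (s.erase i) v).eval x = (nodal s v).eval x / (x - v i) := by
  rw [nodal_eq_mul_nodal_erase hi, eval_mul, eval_sub, eval_X, eval_C,
    mul_div_cancel_left₀ _ (sub_ne_zero.mpr hx)]

theorem Lagrange.coeff_nodal_erase_mul_vandermonde_transpose {R : Type*} [CommRing R]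
    [Nontrivial R] {n : ℕ} (z : Fin n → R) :
    (of fun j (m : Fin n) => (nodal (univ.erase j) z).coeff m) * (vandermonde z)ᵀ
      = diagonal fun j => ∏ k ∈ univ.erase j, (z j - z k) := by
  rw [show (vandermonde z)ᵀ = of fun (m : Fin n) k => z k ^ (m : ℕ) from rfl,
    ← of_eval_eq_coeff_mul_pow _ (natDegree_nodal_erase_lt z)]
  ext j k
  rcases eq_or_ne j k with rfl | hjk
  · simp [eval_nodal]
  · rw [of_apply, diagonal_apply_ne _ hjk,
      eval_nodal_at_node (mem_erase.mpr ⟨hjk.symm, mem_univ k⟩)]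

theorem Lagrange.det_coeff_nodal_erase {R : Type*} [CommRing R] [IsDomain R] {n : ℕ}
    {z : Fin n → R} (hz : Function.Injective z) :
    det (of fun j (m : Fin n) => (nodal (univ.erase j) z).coeff m)
      = (-1) ^ (n * (n - 1) / 2) * det (vandermonde z) := by
  apply mul_right_cancel₀ (det_vandermonde_ne_zero_iff.mpr hz)
  calc
    _ = det ((of fun j (m : Fin n) => (nodal (univ.erase j) z).coeff m) * (vandermonde z)ᵀ) := by
        rw [det_mul, det_transpose]
    _ = ∏ j, ∏ k ∈ univ.erase j, (z j - z k) := by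
        rw [coeff_nodal_erase_mul_vandermonde_transpose, det_diagonal]
    _ = _ := by rw [Fin.prod_prod_erase_sub, det_vandermonde]; ring

def cauchyVandermonde {F : Type*} [DivisionRing F] {n₁ n₂ : ℕ} (t : Fin (n₁ + n₂) → F)
    (z : Fin n₂ → F) : Matrix (Fin (n₁ + n₂)) (Fin (n₁ + n₂)) F :=
  (fromRows (of fun (a : Fin n₁) k => t k ^ (a : ℕ)) (of fun j k => (t k - z j)⁻¹)).submatrix
    finSumFinEquiv.symm id

theorem prod_eval_nodal_mul_det_cauchyVandermonde {F : Type*} [Field F] {n₁ n₂ : ℕ}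
    (t : Fin (n₁ + n₂) → F) {z : Fin n₂ → F} (hz : Function.Injective z)
    (htz : ∀ j k, t k ≠ z j) :
    (∏ k, (nodal univ z).eval (t k)) * det (cauchyVandermonde t z)
      = (-1) ^ (n₁ * n₂ + n₂ * (n₂ - 1) / 2) * det (vandermonde t) *
          det (vandermonde z) := by
  have hscaled : (of fun i k => (nodal univ z).eval (t k) * cauchyVandermonde t z i k)
      = (fromRows (of fun (a : Fin n₁) k => t k ^ (a : ℕ) * (nodal univ z).eval (t k))
          (of fun j k => (nodal (univ.erase j) z).eval (t k))).submatrix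
        finSumFinEquiv.symm id := by
    ext i k
    obtain ⟨a | j, rfl⟩ := finSumFinEquiv.surjective i
    · simp [cauchyVandermonde, mul_comm]
    · simp [cauchyVandermonde, eval_nodal_erase (mem_univ j) (htz j k), div_eq_mul_inv]
  rw [← det_mul_row, hscaled, of_eval_eq_coeff_mul_pow _ (natDegree_nodal_erase_lt z) t,
    det_submatrix_fromRows_mul, det_coeff_nodal_erase hz,
    det_submatrix_fromRows_pow_mul_eval_pow nodal_monic (by simp [natDegree_nodal])]
  ring

/-- The Cauchy–Vandermonde determinant. -/
theorem cauchy_vandermonde (n₁ n₂ : ℕ)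
    (t : Fin (n₁ + n₂) → ℂ) (z : Fin n₂ → ℂ)
    (htz : ∀ (j : Fin n₂) (k : Fin (n₁ + n₂)), t k ≠ z j) :
    (Matrix.of fun i k : Fin (n₁ + n₂) =>
        Sum.elim (fun a : Fin n₁ => t k ^ (a : ℕ))
          (fun j : Fin n₂ => (t k - z j)⁻¹) (finSumFinEquiv.symm i)).det
      = (-1 : ℂ) ^ (n₁ * n₂ + n₂ * (n₂ - 1) / 2) *
        (∏ k : Fin (n₁ + n₂), ∏ j ∈ Finset.Iio k, (t k - t j)) *
        (∏ k : Fin n₂, ∏ j ∈ Finset.Iio k, (z k - z j)) *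
        (∏ j : Fin n₂, ∏ k : Fin (n₁ + n₂), (t k - z j)⁻¹) := by
  have hmatrix : (Matrix.of fun i k : Fin (n₁ + n₂) =>
      Sum.elim (fun a : Fin n₁ => t k ^ (a : ℕ))
        (fun j : Fin n₂ => (t k - z j)⁻¹) (finSumFinEquiv.symm i))
      = cauchyVandermonde t z := by
    ext i k
    obtain ⟨a | j, rfl⟩ := finSumFinEquiv.surjective i <;> simp [cauchyVandermonde]
  simp_rw [hmatrix, prod_prod_Iio_eq_prod_prod_Ioi, ← det_vandermonde]
  by_cases hz : Function.Injective z
  · have hZ : ∏ k, (nodal univ z).eval (t k) ≠ 0 := prod_ne_zero_iff.2 fun k _ => by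
      rw [eval_nodal]
      exact prod_ne_zero_iff.2 fun j _ => sub_ne_zero.2 (htz j k)
    have hinv :
        ∏ j : Fin n₂, ∏ k, (t k - z j)⁻¹ = (∏ k, (nodal univ z).eval (t k))⁻¹ := by
      simp_rw [eval_nodal, prod_inv_distrib]
      rw [prod_comm]
    rw [hinv, eq_mul_inv_iff_mul_eq₀ hZ, mul_comm,
      prod_eval_nodal_mul_det_cauchyVandermonde t hz htz]
  · obtain ⟨a, b, hab, hne⟩ := Function.not_injective_iff.mp hz
    rw [det_vandermonde_eq_zero_iff.mpr ⟨a, b, hab, hne⟩,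
      det_zero_of_row_eq (i := finSumFinEquiv (.inr a)) (j := finSumFinEquiv (.inr b))
        (by simpa using hne) (by ext k; simp [cauchyVandermonde, hab])]
    simp
end

section
/- Let μ_1, μ_2 be finite measures of constant sign on ℝ with all moments finite, and let μ̃_1 be defined by dμ̃_1(x) = dμ_1(x) + (Σ_{j=0}^{s} k_j x^j) dμ_2(x) for some constants k_0,…,k_s ∈ ℝ. For a multi-index (n_1, n_2) ∈ ℕ², let H_{(n_1,n_2)} denote the (n_1+n_2)×(n_1+n_2) matrix whose first n_1 rows are (c^{(1)}_{i+j})_{0≤i≤n_1−1, 0≤j≤n_1+n_2−1} built from the moments of the first measure, and whose last n_2 rows are similarly built from the moments c^{(2)}_k of μ_2. Then for any (n_1, n_2) with n_1 ≤ n_2 − s, det H_{(n_1,n_2)} computed for the pair (μ_1, μ_2) equals det H_{(n_1,n_2)} computed for the pair (μ̃_1, μ_2). -/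
open MeasureTheory

/-- The stacked generalized Hankel matrix of two moment sequences: the first
`n₁` rows are Hankel rows of `c`, the last `n₂` rows are Hankel rows of `d`. -/
noncomputable def stackedHankel (c d : ℕ → ℝ) (n₁ n₂ : ℕ) :
    Matrix (Fin (n₁ + n₂)) (Fin (n₁ + n₂)) ℝ :=
  Matrix.of fun i j =>
    Sum.elim (fun a : Fin n₁ => c ((a : ℕ) + (j : ℕ)))
      (fun b : Fin n₂ => d ((b : ℕ) + (j : ℕ))) (finSumFinEquiv.symm i)

/-- perturbing `μ₁` by a polynomial multiple of `μ₂`,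
`dμ̃₁ = dμ₁ + (∑_{j=0}^s k_j x^j) dμ₂`, does not change the stacked Hankel
determinant for indices with `n₁ ≤ n₂ - s`. -/
theorem perturbation_det_eq (μ₁ μ₂ : Measure ℝ)
    [IsFiniteMeasure μ₁] [IsFiniteMeasure μ₂]
    (hmom₁ : ∀ p : ℕ, Integrable (fun x : ℝ => x ^ p) μ₁)
    (hmom₂ : ∀ p : ℕ, Integrable (fun x : ℝ => x ^ p) μ₂)
    (s : ℕ) (K : ℕ → ℝ)
    (c₁ c₂ c₁' : ℕ → ℝ)
    (hc₁ : ∀ p, c₁ p = ∫ x, x ^ p ∂μ₁)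
    (hc₂ : ∀ p, c₂ p = ∫ x, x ^ p ∂μ₂)
    (hc₁' : ∀ p, c₁' p = (∫ x, x ^ p ∂μ₁) + ∫ x, x ^ p * ∑ j ∈ Finset.range (s + 1), K j * x ^ j ∂μ₂)
    (n₁ n₂ : ℕ) (hn : n₁ ≤ n₂ - s) :
    (stackedHankel c₁ c₂ n₁ n₂).det = (stackedHankel c₁' c₂ n₁ n₂).det := by
  classical
  -- Expand the perturbed moments
  have hexp : ∀ p, c₁' p = c₁ p + ∑ j ∈ Finset.range (s + 1), K j * c₂ (p + j) := by
    intro p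
    have hfun : (fun x : ℝ => x ^ p * ∑ j ∈ Finset.range (s + 1), K j * x ^ j)
        = fun x : ℝ => ∑ j ∈ Finset.range (s + 1), K j * x ^ (p + j) := by
      funext x
      rw [Finset.mul_sum]
      refine Finset.sum_congr rfl fun j _ => ?_
      rw [pow_add]; ring
    rw [hc₁' p, hfun, integral_finset_sum _ (fun j _ => (hmom₂ (p + j)).const_mul (K j)),
      hc₁ p]
    congr 1
    refine Finset.sum_congr rfl fun j _ => ?_
    rw [integral_const_mul, hc₂]
  -- The row-operation matrix
  set B : Matrix (Fin n₁) (Fin n₂) ℝ :=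
    Matrix.of fun a b =>
      ∑ j' ∈ Finset.range (s + 1), if (b : ℕ) = (a : ℕ) + j' then K j' else 0 with hB
  set E : Matrix (Fin (n₁ + n₂)) (Fin (n₁ + n₂)) ℝ :=
    (Matrix.fromBlocks 1 B 0 1).submatrix finSumFinEquiv.symm finSumFinEquiv.symm with hE
  have hEdet : E.det = 1 := by
    rw [hE, Matrix.det_submatrix_equiv_self, Matrix.det_fromBlocks_zero₂₁,
      Matrix.det_one, Matrix.det_one, one_mul]
  have hmul : stackedHankel c₁' c₂ n₁ n₂ = E * stackedHankel c₁ c₂ n₁ n₂ := by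
    ext i j
    rw [Matrix.mul_apply,
      ← Equiv.sum_comp finSumFinEquiv
        (fun k => E i k * stackedHankel c₁ c₂ n₁ n₂ k j)]
    simp only [hE, stackedHankel, Matrix.submatrix_apply, Matrix.of_apply,
      Equiv.symm_apply_apply, Fintype.sum_sum_type, Sum.elim_inl, Sum.elim_inr]
    rcases hi : finSumFinEquiv.symm i with a | b
    · -- first-block row
      simp only [Sum.elim_inl, Matrix.fromBlocks_apply₁₁, Matrix.fromBlocks_apply₁₂,
        Matrix.one_apply, hB, Matrix.of_apply]
      have h1 : (∑ a' : Fin n₁, (if a = a' then (1 : ℝ) else 0) * c₁ ((a' : ℕ) + (j : ℕ)))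
          = c₁ ((a : ℕ) + (j : ℕ)) := by
        rw [Finset.sum_eq_single a] <;> simp (config := { contextual := true }) [eq_comm]
      have h2 : (∑ b : Fin n₂,
            (∑ j' ∈ Finset.range (s + 1), if (b : ℕ) = (a : ℕ) + j' then K j' else 0)
              * c₂ ((b : ℕ) + (j : ℕ)))
          = ∑ j' ∈ Finset.range (s + 1), K j' * c₂ ((a : ℕ) + (j : ℕ) + j') := by
        simp only [Finset.sum_mul]
        rw [Finset.sum_comm]
        refine Finset.sum_congr rfl fun j' hj' => ?_
        have hj's : j' ≤ s := by
          simpa [Nat.lt_succ_iff] using Finset.mem_range.mp hj'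
        have hb : (a : ℕ) + j' < n₂ := by
          have ha := a.2
          omega
        rw [Finset.sum_eq_single (⟨(a : ℕ) + j', hb⟩ : Fin n₂)]
        · simp only [ite_mul, zero_mul]
          rw [if_pos trivial]
          congr 2
          omega
        · intro b _ hne
          have : (b : ℕ) ≠ (a : ℕ) + j' := fun h => hne (Fin.ext h)
          simp [this]
        · simp
      rw [h1, h2, hexp]
    · -- second-block row
      simp only [Sum.elim_inr, Matrix.fromBlocks_apply₂₁, Matrix.fromBlocks_apply₂₂,
        Matrix.one_apply, Matrix.zero_apply, zero_mul, Finset.sum_const_zero, zero_add]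
      rw [Finset.sum_eq_single b] <;> simp (config := { contextual := true }) [eq_comm]
  rw [hmul, Matrix.det_mul, hEdet, one_mul]
end
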